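/- arXiv:1309.4258 — 6 statements merged into one kernel-verified Lean document; each statement's English description precedes it below -/
import Mathlib

section
/- Let a, b be real numbers with a > 0, b > 0 and a - b + 1 ≠ 0. Then for every natural number n, Σ_{k=0}^{n} Γ(k+a)/Γ(k+b) = (1/(a-b+1))·[Γ(n+a+1)/Γ(n+b) - Γ(a)/Γ(b-1)]. -/
open Finset

theorem Real.Gamma_add_one_div_sub_Gamma_div_sub_one {x y : ℝ} (hx : x ≠ 0) (hy : y ≠ 1) :
    Real.Gamma (x + 1) / Real.Gamma y - Real.Gamma x / Real.Gamma (y - 1) =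
      (x - y + 1) * (Real.Gamma x / Real.Gamma y) := by
  have hy' : y - 1 ≠ 0 := sub_ne_zero.mpr hy
  have hGy : Real.Gamma y = (y - 1) * Real.Gamma (y - 1) := by
    simpa using Real.Gamma_add_one hy'
  rw [← mul_div_mul_left (Real.Gamma x) _ hy', ← hGy, Real.Gamma_add_one hx]
  ring

/-- Telescoping: the summand is the forward difference of `k ↦ Γ(k + a) / Γ(k + b - 1)`. -/
theorem Real.mul_sum_range_Gamma_div_Gamma {a b : ℝ} (ha : ∀ k : ℕ, (k : ℝ) + a ≠ 0)
    (hb : ∀ k : ℕ, (k : ℝ) + b ≠ 1) (n : ℕ) :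
    (a - b + 1) * ∑ k ∈ range n, Real.Gamma (k + a) / Real.Gamma (k + b) =
      Real.Gamma (n + a) / Real.Gamma (n + b - 1) - Real.Gamma a / Real.Gamma (b - 1) := by
  have term_eq_diff (k : ℕ) : (a - b + 1) * (Real.Gamma (k + a) / Real.Gamma (k + b)) =
      Real.Gamma ((k + 1 : ℕ) + a) / Real.Gamma ((k + 1 : ℕ) + b - 1) -
        Real.Gamma (k + a) / Real.Gamma (k + b - 1) := by
    push_cast
    rw [add_right_comm _ 1 a, show (k : ℝ) + 1 + b - 1 = k + b by ring,
      Real.Gamma_add_one_div_sub_Gamma_div_sub_one (ha k) (hb k)]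
    ring
  rw [mul_sum, sum_congr rfl fun k _ => term_eq_diff k,
    sum_range_sub (fun k : ℕ => Real.Gamma (k + a) / Real.Gamma (k + b - 1))]
  simp

/-- Prudnikov's summation formula for ratios of Gamma functions. -/
theorem gamma_ratio_sum
    (a b : ℝ) (ha : 0 < a) (hb : 1 < b) (hab : a - b + 1 ≠ 0) :
    ∀ n : ℕ,
      ∑ k ∈ Finset.range (n + 1), Real.Gamma ((k : ℝ) + a) / Real.Gamma ((k : ℝ) + b) =
        (1 / (a - b + 1)) *
          (Real.Gamma ((n : ℝ) + a + 1) / Real.Gamma ((n : ℝ) + b)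
            - Real.Gamma a / Real.Gamma (b - 1)) := by
  intro n
  rw [one_div_mul_eq_div, eq_div_iff hab, mul_comm,
    Real.mul_sum_range_Gamma_div_Gamma (fun k => by positivity)
      (fun k => by linarith [(k.cast_nonneg : (0 : ℝ) ≤ k)])]
  push_cast
  ring_nf
end

section
/- Let α > 0 and β ≥ 0. Define x_1 = 1/(α+β+1) and x_w = ((α(w-1)+β)/(αw+β+1))·x_{w-1} for w ≥ 2. Then Σ_{w=1}^{∞} x_w = 1, i.e., (x_w)_{w≥1} is a probability distribution on the positive integers. -/
/-!
With `c n = α (n + 1) + β` and `y n = x (n + 1)`, the recurrence reads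
`(c (n + 1) + 1) y (n + 1) = c n y n`, so the tail `c n y n` equals `1 - ∑_{k ≤ n} y k` and is
non-increasing. Its limit `L` satisfies `y n ≥ L / c n`; since `∑ 1 / c n` diverges like the
harmonic series while `∑ y n ≤ 1`, `L = 0`.
-/

open Finset Filter Topology

theorem Real.not_summable_inv_mul_add {a : ℝ} (ha : a ≠ 0) (b : ℝ) :
    ¬Summable fun n : ℕ => (a * n + b)⁻¹ := by
  rw [← summable_abs_iff]
  have hrw : (fun n : ℕ => |(a * n + b)⁻¹|) =
      fun n : ℕ => |a|⁻¹ * (1 / |n + b / a| ^ (1 : ℝ)) := by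
    funext n
    rw [Real.rpow_one, one_div, ← abs_inv, ← abs_inv, ← abs_mul, ← mul_inv, mul_add,
      mul_div_cancel₀ b ha]
  rw [hrw, summable_mul_left_iff (inv_ne_zero (abs_ne_zero.mpr ha)),
    Real.summable_one_div_nat_add_rpow]
  exact lt_irrefl 1

structure IsTailRecurrence (c y : ℕ → ℝ) : Prop where
  coeff_nonneg : ∀ n, 0 ≤ c n
  zero : (c 0 + 1) * y 0 = 1
  succ : ∀ n, (c (n + 1) + 1) * y (n + 1) = c n * y n

namespace IsTailRecurrence

variable {c y : ℕ → ℝ}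

theorem nonneg (h : IsTailRecurrence c y) (n : ℕ) : 0 ≤ y n := by
  induction n with
  | zero =>
    exact (pos_of_mul_pos_right (h.zero ▸ one_pos) (by linarith [h.coeff_nonneg 0])).le
  | succ n ih =>
    have hprod : 0 ≤ (c (n + 1) + 1) * y (n + 1) := h.succ n ▸ mul_nonneg (h.coeff_nonneg n) ih
    exact nonneg_of_mul_nonneg_right hprod (by linarith [h.coeff_nonneg (n + 1)])

theorem sum_range_succ_add_tail (h : IsTailRecurrence c y) (n : ℕ) :
    ∑ k ∈ range (n + 1), y k + c n * y n = 1 := by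
  induction n with
  | zero => rw [sum_range_one]; linarith [h.zero]
  | succ n ih => rw [sum_range_succ]; linarith [h.succ n]

theorem tail_nonneg (h : IsTailRecurrence c y) (n : ℕ) : 0 ≤ c n * y n :=
  mul_nonneg (h.coeff_nonneg n) (h.nonneg n)

theorem summable (h : IsTailRecurrence c y) : Summable y := by
  refine summable_of_sum_range_le (c := 1) h.nonneg fun n => ?_
  calc ∑ k ∈ range n, y k ≤ ∑ k ∈ range (n + 1), y k := by
        rw [sum_range_succ]; linarith [h.nonneg n]
    _ ≤ 1 := by linarith [h.sum_range_succ_add_tail n, h.tail_nonneg n]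

theorem tendsto_tail_zero (h : IsTailRecurrence c y) (hdiv : ¬Summable fun n => (c n)⁻¹) :
    Tendsto (fun n => c n * y n) atTop (𝓝 0) := by
  have tail_anti : Antitone fun n => c n * y n :=
    antitone_nat_of_succ_le fun n => by linarith [h.succ n, h.nonneg (n + 1)]
  have tail_bdd : BddBelow (Set.range fun n => c n * y n) :=
    ⟨0, Set.forall_mem_range.mpr h.tail_nonneg⟩
  set L := ⨅ n, c n * y n
  suffices L = 0 from this ▸ tendsto_atTop_ciInf tail_anti tail_bdd
  refine le_antisymm (not_lt.mp fun hL => hdiv ?_) (le_ciInf h.tail_nonneg)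
  refine (summable_mul_left_iff hL.ne').mp (h.summable.of_nonneg_of_le
    (fun n => mul_nonneg hL.le (inv_nonneg.mpr (h.coeff_nonneg n))) fun n => ?_)
  rcases (h.coeff_nonneg n).eq_or_lt with hcn | hcn
  · simp [← hcn, h.nonneg n]
  · rw [← div_eq_mul_inv, div_le_iff₀ hcn, mul_comm]
    exact ciInf_le tail_bdd n

theorem hasSum_one (h : IsTailRecurrence c y) (hdiv : ¬Summable fun n => (c n)⁻¹) :
    HasSum y 1 := by
  rw [hasSum_iff_tendsto_nat_of_nonneg h.nonneg, ← tendsto_add_atTop_iff_nat 1]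
  have := (h.tendsto_tail_zero hdiv).const_sub 1
  rw [sub_zero] at this
  exact this.congr fun n => by linarith [h.sum_range_succ_add_tail n]

end IsTailRecurrence

/-- the weight distribution sums to 1. -/
theorem weight_distribution_sums_to_one
    (α β : ℝ) (hα : 0 < α) (hβ : 0 ≤ β)
    (x : ℕ → ℝ)
    (hx1 : x 1 = 1 / (α + β + 1))
    (hrec : ∀ w : ℕ, 2 ≤ w → x w = ((α * ((w : ℝ) - 1) + β) / (α * w + β + 1)) * x (w - 1)) :
    HasSum (fun w : ℕ => x (w + 1)) 1 := by
  have hrecurrence : IsTailRecurrence (fun n : ℕ => α * (n + 1) + β) (fun n => x (n + 1)) := by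
    refine ⟨fun n => by positivity, ?_, fun n => ?_⟩
    · rw [hx1]
      field_simp
      ring
    · have hden : α * ((n : ℝ) + 1 + 1) + β + 1 ≠ 0 := by positivity
      rw [hrec (n + 2) (by omega)]
      push_cast
      field_simp
      ring_nf
  have hdiv : ¬Summable fun n : ℕ => (α * (n + 1) + β)⁻¹ := by
    simpa only [mul_add, mul_one, add_assoc] using Real.not_summable_inv_mul_add hα.ne' (α + β)
  exact hrecurrence.hasSum_one hdiv
end

section
/- Let N ≥ 3 and let α₁, α₂ > 0, β ≥ 0 with α = α₁+α₂. Define x_{d,w} by the recursion: x_{N-1,1} = 1/(α+β+1); x_{d,1} = 0 for d ≠ N-1; x_{d,w} = 0 for d outside [N-1,(N-1)w]; and x_{d,w} = (1/(αw+β+1))·[α₁(w-1)x_{d,w-1} + α₂(w-1)x_{d-1,w-1} + β x_{d-(N-1),w-1}] for w ≥ 2, N-1 ≤ d ≤ (N-1)w. Then Σ_{w=1}^{∞} Σ_{d=N-1}^{(N-1)w} x_{d,w} = 1, i.e., (x_{d,w}) is a two-dimensional probability distribution. -/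
/-!
Write `s w` for the total mass of level `w`. Summing the recursion over `d`, each of the three
shifted sums again equals `s w` because `x · w` vanishes outside its range, so
`(α (w + 1) + β + 1) s (w + 1) = (α w + β) s w`. With `u w = (α w + β + 1) s w` this says
`s w = u w - u (w + 1)`, so the partial sums are `1 - u (n + 1)`, and
`u (n + 1) = ∏ (1 - 1 / (α j + β + 1))` tends to `0` because the harmonic-type series
`∑ 1 / (α j + β + 1)` diverges.
-/

open Finset Filter Topology

theorem tendsto_prod_range_one_sub_of_not_summable {a : ℕ → ℝ} (h0 : ∀ n, 0 ≤ a n)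
    (h1 : ∀ n, a n ≤ 1) (ha : ¬Summable a) :
    Tendsto (fun n ↦ ∏ i ∈ range n, (1 - a i)) atTop (𝓝 0) := by
  have hle : ∀ n, ∏ i ∈ range n, (1 - a i) ≤ Real.exp (-∑ i ∈ range n, a i) := fun n ↦ by
    rw [← sum_neg_distrib, Real.exp_sum]
    exact prod_le_prod (fun i _ ↦ sub_nonneg.2 (h1 i)) fun i _ ↦ by
      linarith [Real.add_one_le_exp (-a i)]
  exact tendsto_of_tendsto_of_tendsto_of_le_of_le tendsto_const_nhds
    (Real.tendsto_exp_neg_atTop_nhds_zero.comp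
      ((not_summable_iff_tendsto_nat_atTop_of_nonneg h0).1 ha))
    (fun n ↦ prod_nonneg fun i _ ↦ sub_nonneg.2 (h1 i)) hle

theorem Real.not_summable_one_div_mul_add {a b : ℝ} (ha : 0 ≤ a) (hb : 0 < b) :
    ¬Summable fun n : ℕ ↦ 1 / (a * (n + 1) + b) := by
  intro h
  refine Real.not_summable_one_div_natCast ((summable_nat_add_iff 1).1 ?_)
  refine (h.mul_left (a + b)).of_nonneg_of_le (fun n ↦ by positivity) fun n ↦ ?_
  rw [mul_one_div, div_le_div_iff₀ (by positivity) (by positivity)]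
  push_cast
  nlinarith

theorem hasSum_one_of_mul_succ_eq {c s : ℕ → ℝ} (hc : ∀ n, 0 ≤ c n)
    (hdiv : ¬Summable fun n ↦ 1 / (c n + 1)) (h0 : (c 0 + 1) * s 0 = 1)
    (hs : ∀ n, (c (n + 1) + 1) * s (n + 1) = c n * s n) : HasSum s 1 := by
  have hpos : ∀ n, 0 < c n + 1 := fun n ↦ by linarith [hc n]
  set u : ℕ → ℝ := fun n ↦ (c n + 1) * s n
  have hu : u = fun n ↦ ∏ i ∈ range n, (1 - 1 / (c i + 1)) := by
    funext n
    induction n with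
    | zero => simpa using h0
    | succ n ih =>
      rw [prod_range_succ, ← ih]
      simp only [u, hs]
      field_simp [(hpos n).ne']
      ring
  have hfactor : ∀ n, 1 / (c n + 1) ≤ 1 := fun n ↦ by
    rw [div_le_one (hpos n)]; linarith [hc n]
  have hs_nonneg : ∀ n, 0 ≤ s n := fun n ↦ by
    have : 0 ≤ u n := hu ▸ prod_nonneg fun i _ ↦ sub_nonneg.2 (hfactor i)
    exact nonneg_of_mul_nonneg_right (by simpa [u] using this) (hpos n)
  have hu_lim : Tendsto u atTop (𝓝 0) := hu ▸
    tendsto_prod_range_one_sub_of_not_summable (fun n ↦ (one_div_pos.2 (hpos n)).le) hfactor hdiv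
  rw [hasSum_iff_tendsto_nat_of_nonneg hs_nonneg]
  have hs_eq : ∀ n, s n = u n - u (n + 1) := fun n ↦ by simp only [u, hs]; ring
  simp_rw [hs_eq, sum_range_sub']
  simpa [u, h0] using (tendsto_const_nhds (x := (1 : ℝ))).sub hu_lim

theorem sum_Icc_comp_sub_of_eq_zero {M : Type*} [AddCommMonoid M] {f : ℤ → M} {a b : ℤ}
    (hf : ∀ d ∉ Icc a b, f d = 0) {k a' b' : ℤ} (ha : a' ≤ a + k) (hb : b + k ≤ b') :
    ∑ d ∈ Icc a' b', f (d - k) = ∑ d ∈ Icc a b, f d := by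
  rw [sum_subset (Icc_subset_Icc (show a' - k ≤ a by omega) (show b ≤ b' - k by omega))
    fun d _ hd ↦ hf d hd]
  exact sum_nbij' (· - k) (· + k) (fun d hd ↦ by simp only [mem_Icc] at hd ⊢; omega)
    (fun d hd ↦ by simp only [mem_Icc] at hd ⊢; omega) (fun _ _ ↦ by simp)
    (fun _ _ ↦ by simp) fun _ _ ↦ by simp

theorem sum_level_succ {N : ℕ} (hN : 2 ≤ N) {α α₁ α₂ β : ℝ} (hα : α = α₁ + α₂)
    {x : ℤ → ℕ → ℝ}
    (hx0 : ∀ (d : ℤ) (w : ℕ), 1 ≤ w → (d < (N : ℤ) - 1 ∨ ((N : ℤ) - 1) * w < d) → x d w = 0)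
    (hrec : ∀ (d : ℤ) (w : ℕ), 2 ≤ w → (N : ℤ) - 1 ≤ d → d ≤ ((N : ℤ) - 1) * w →
      x d w = (1 / (α * w + β + 1)) *
        (α₁ * ((w : ℝ) - 1) * x d (w - 1) + α₂ * ((w : ℝ) - 1) * x (d - 1) (w - 1)
          + β * x (d - ((N : ℤ) - 1)) (w - 1)))
    {w : ℕ} (hw : 1 ≤ w) (hden : α * (w + 1) + β + 1 ≠ 0) :
    (α * (w + 1) + β + 1) * ∑ d ∈ Icc ((N : ℤ) - 1) (((N : ℤ) - 1) * (w + 1)), x d (w + 1)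
      = (α * w + β) * ∑ d ∈ Icc ((N : ℤ) - 1) (((N : ℤ) - 1) * w), x d w := by
  have hN' : (2 : ℤ) ≤ N := by exact_mod_cast hN
  have hsupp : ∀ d ∉ Icc ((N : ℤ) - 1) (((N : ℤ) - 1) * w), x d w = 0 := fun d hd ↦
    hx0 d w hw (by rwa [mem_Icc, not_and_or, not_le, not_le] at hd)
  have hshift (k : ℤ) (hk0 : 0 ≤ k) (hk : k ≤ (N : ℤ) - 1) :
      ∑ d ∈ Icc ((N : ℤ) - 1) (((N : ℤ) - 1) * (w + 1)), x (d - k) w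
        = ∑ d ∈ Icc ((N : ℤ) - 1) (((N : ℤ) - 1) * w), x d w :=
    sum_Icc_comp_sub_of_eq_zero hsupp (by omega) (by linarith)
  -- `x (d - 0) w` lets the first sum be rewritten by `hshift 0` like the other two.
  have hstep : ∀ d ∈ Icc ((N : ℤ) - 1) (((N : ℤ) - 1) * (w + 1)), x d (w + 1)
      = 1 / (α * (w + 1) + β + 1) *
        (α₁ * w * x (d - 0) w + α₂ * w * x (d - 1) w + β * x (d - ((N : ℤ) - 1)) w) := by
    intro d hd
    rw [mem_Icc] at hd
    simpa using hrec d (w + 1) (by omega) hd.1 (by exact_mod_cast hd.2)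
  rw [sum_congr rfl hstep, ← mul_sum, ← mul_assoc, mul_one_div_cancel hden, one_mul,
    sum_add_distrib, sum_add_distrib, ← mul_sum, ← mul_sum, ← mul_sum, hshift 0 le_rfl (by omega),
    hshift 1 zero_le_one (by omega), hshift _ (by omega) le_rfl, hα]
  ring

theorem two_dim_distribution_sums_to_one_general
    (N : ℕ) (hN : 3 ≤ N)
    (α₁ α₂ α β : ℝ) (hα₁ : 0 < α₁) (hα₂ : 0 < α₂) (hβ : 0 ≤ β) (hα : α = α₁ + α₂)
    (x : ℤ → ℕ → ℝ)
    (hx11 : x ((N : ℤ) - 1) 1 = 1 / (α + β + 1))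
    (hx0 : ∀ (d : ℤ) (w : ℕ), 1 ≤ w → (d < (N : ℤ) - 1 ∨ ((N : ℤ) - 1) * w < d) → x d w = 0)
    (hrec : ∀ (d : ℤ) (w : ℕ), 2 ≤ w → (N : ℤ) - 1 ≤ d → d ≤ ((N : ℤ) - 1) * w →
      x d w = (1 / (α * w + β + 1)) *
        (α₁ * ((w : ℝ) - 1) * x d (w - 1) + α₂ * ((w : ℝ) - 1) * x (d - 1) (w - 1)
          + β * x (d - ((N : ℤ) - 1)) (w - 1))) :
    HasSum
      (fun w : ℕ =>
        ∑ d ∈ Finset.Icc ((N : ℤ) - 1) (((N : ℤ) - 1) * (w + 1)), x d (w + 1)) 1 := by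
  have hα0 : 0 ≤ α := by linarith
  refine hasSum_one_of_mul_succ_eq (c := fun n : ℕ ↦ α * ((n : ℝ) + 1) + β)
    (fun n ↦ by positivity) ?_ ?_ fun n ↦ ?_
  · simpa only [add_assoc] using
      Real.not_summable_one_div_mul_add hα0 (show 0 < β + 1 by linarith)
  · simp only [Nat.cast_zero, zero_add, mul_one, Icc_self, sum_singleton, hx11]
    exact mul_one_div_cancel (by positivity)
  · simpa only [Nat.cast_add, Nat.cast_one] using
      sum_level_succ (by omega) hα hx0 hrec (w := n + 1) (by omega) (by positivity)

/-- (x_{d,w}) is a two-dimensional probability distribution. -/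
theorem two_dim_distribution_sums_to_one
    (N : ℕ) (hN : 3 ≤ N)
    (α₁ α₂ α β : ℝ) (hα₁ : 0 < α₁) (hα₂ : 0 < α₂) (hβ : 0 ≤ β) (hα : α = α₁ + α₂)
    (x : ℤ → ℕ → ℝ)
    (hx11 : x ((N : ℤ) - 1) 1 = 1 / (α + β + 1))
    (hx1 : ∀ d : ℤ, d ≠ (N : ℤ) - 1 → x d 1 = 0)
    (hx0 : ∀ (d : ℤ) (w : ℕ), 1 ≤ w → (d < (N : ℤ) - 1 ∨ ((N : ℤ) - 1) * w < d) → x d w = 0)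
    (hrec : ∀ (d : ℤ) (w : ℕ), 2 ≤ w → (N : ℤ) - 1 ≤ d → d ≤ ((N : ℤ) - 1) * w →
      x d w = (1 / (α * w + β + 1)) *
        (α₁ * ((w : ℝ) - 1) * x d (w - 1) + α₂ * ((w : ℝ) - 1) * x (d - 1) (w - 1)
          + β * x (d - ((N : ℤ) - 1)) (w - 1))) :
    HasSum
      (fun w : ℕ =>
        ∑ d ∈ Finset.Icc ((N : ℤ) - 1) (((N : ℤ) - 1) * (w + 1)), x d (w + 1)) 1 :=
  two_dim_distribution_sums_to_one_general N hN α₁ α₂ α β hα₁ hα₂ hβ hα x hx11 hx0 hrec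
end

section
/- Let N ≥ 3 and α₁, α₂ > 0, β > 0, α = α₁+α₂, with x_{d,w} defined by the N-interactions recursion. Then for every integer d ≥ N-1 there exists a positive integer w with N-1 ≤ d ≤ (N-1)w such that x_{d,w} > 0. Consequently u_d := Σ_{w≥⌈d/(N-1)⌉} x_{d,w} > 0 for every d ≥ N-1. -/
/-!
Along the diagonal `w ↦ (N - 2 + w, w)` the recursion stays inside the admissible region
`N - 1 ≤ d ≤ (N - 1) w`, and its `α₂`-term links each diagonal entry to the previous one.
Since all entries are nonnegative and all coefficients positive, positivity of
`x_{N-1,1} = 1 / (α + β + 1)` propagates along the whole diagonal, which reaches every `d ≥ N - 1`.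
-/

lemma recursion_value_pos {α₁ α₂ α β w a b c : ℝ} (hα₁ : 0 ≤ α₁) (hα₂ : 0 < α₂) (hα : 0 ≤ α)
    (hβ : 0 ≤ β) (hw : 1 < w) (ha : 0 ≤ a) (hb : 0 < b) (hc : 0 ≤ c) :
    0 < 1 / (α * w + β + 1) * (α₁ * (w - 1) * a + α₂ * (w - 1) * b + β * c) := by
  have hw' : 0 < w - 1 := sub_pos.mpr hw
  have hden : 0 < α * w + β + 1 := by nlinarith
  positivity

lemma pos_diagonal (N : ℕ) (hN : 2 ≤ N) {α₁ α₂ α β : ℝ} (hα₁ : 0 ≤ α₁) (hα₂ : 0 < α₂)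
    (hα : 0 ≤ α) (hβ : 0 ≤ β) (x : ℤ → ℕ → ℝ) (hx11 : 0 < x ((N : ℤ) - 1) 1)
    (hrec : ∀ (d : ℤ) (w : ℕ), 2 ≤ w → (N : ℤ) - 1 ≤ d → d ≤ ((N : ℤ) - 1) * w →
      x d w = (1 / (α * w + β + 1)) *
        (α₁ * ((w : ℝ) - 1) * x d (w - 1) + α₂ * ((w : ℝ) - 1) * x (d - 1) (w - 1)
          + β * x (d - ((N : ℤ) - 1)) (w - 1)))
    (hnonneg : ∀ (d : ℤ) (w : ℕ), 0 ≤ x d w) :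
    ∀ k : ℕ, 0 < x ((N : ℤ) - 1 + k) (k + 1) := by
  intro k
  induction k with
  | zero => simpa using hx11
  | succ k ih =>
    have hin : (N : ℤ) - 1 + (k + 1 : ℕ) ≤ ((N : ℤ) - 1) * (k + 1 + 1 : ℕ) := by
      push_cast
      nlinarith
    rw [hrec _ _ (by omega) (by omega) hin, Nat.add_sub_cancel]
    refine recursion_value_pos hα₁ hα₂ hα hβ (by push_cast; linarith [k.cast_nonneg (α := ℝ)])
      (hnonneg _ _) ?_ (hnonneg _ _)
    convert ih using 2
    push_cast
    ring

theorem u_d_positive_general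
    (N : ℕ) (hN : 3 ≤ N)
    (α₁ α₂ α β : ℝ) (hα₁ : 0 < α₁) (hα₂ : 0 < α₂) (hβ : 0 < β) (hα : α = α₁ + α₂)
    (x : ℤ → ℕ → ℝ)
    (hx11 : x ((N : ℤ) - 1) 1 = 1 / (α + β + 1))
    (hrec : ∀ (d : ℤ) (w : ℕ), 2 ≤ w → (N : ℤ) - 1 ≤ d → d ≤ ((N : ℤ) - 1) * w →
      x d w = (1 / (α * w + β + 1)) *
        (α₁ * ((w : ℝ) - 1) * x d (w - 1) + α₂ * ((w : ℝ) - 1) * x (d - 1) (w - 1)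
          + β * x (d - ((N : ℤ) - 1)) (w - 1)))
    (hnonneg : ∀ (d : ℤ) (w : ℕ), 0 ≤ x d w)
    (hsummable : ∀ d : ℤ, Summable (fun w : ℕ => x d (w + 1))) :
    ∀ d : ℤ, (N : ℤ) - 1 ≤ d →
      (∃ w : ℕ, 1 ≤ w ∧ d ≤ ((N : ℤ) - 1) * w ∧ 0 < x d w) ∧
      0 < ∑' w : ℕ, x d (w + 1) := by
  intro d hd
  obtain ⟨k, rfl⟩ : ∃ k : ℕ, d = (N : ℤ) - 1 + k := ⟨(d - ((N : ℤ) - 1)).toNat, by omega⟩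
  have hα0 : 0 ≤ α := by linarith
  have hpos : 0 < x ((N : ℤ) - 1 + k) (k + 1) :=
    pos_diagonal N (by omega) hα₁.le hα₂ hα0 hβ.le x
      (by rw [hx11]; exact one_div_pos.mpr (by linarith)) hrec hnonneg k
  have hin : (N : ℤ) - 1 + k ≤ ((N : ℤ) - 1) * (k + 1 : ℕ) := by
    push_cast
    nlinarith
  exact ⟨⟨k + 1, by omega, hin, hpos⟩,
    (hsummable _).tsum_pos (fun w => hnonneg _ _) k hpos⟩

/-- for every degree d there is a weight w with x_{d,w} > 0, hence u_d > 0. -/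
theorem u_d_positive
    (N : ℕ) (hN : 3 ≤ N)
    (α₁ α₂ α β : ℝ) (hα₁ : 0 < α₁) (hα₂ : 0 < α₂) (hβ : 0 < β) (hα : α = α₁ + α₂)
    (x : ℤ → ℕ → ℝ)
    (hx11 : x ((N : ℤ) - 1) 1 = 1 / (α + β + 1))
    (hx1 : ∀ d : ℤ, d ≠ (N : ℤ) - 1 → x d 1 = 0)
    (hx0 : ∀ (d : ℤ) (w : ℕ), 1 ≤ w → (d < (N : ℤ) - 1 ∨ ((N : ℤ) - 1) * w < d) → x d w = 0)
    (hrec : ∀ (d : ℤ) (w : ℕ), 2 ≤ w → (N : ℤ) - 1 ≤ d → d ≤ ((N : ℤ) - 1) * w →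
      x d w = (1 / (α * w + β + 1)) *
        (α₁ * ((w : ℝ) - 1) * x d (w - 1) + α₂ * ((w : ℝ) - 1) * x (d - 1) (w - 1)
          + β * x (d - ((N : ℤ) - 1)) (w - 1)))
    (hnonneg : ∀ (d : ℤ) (w : ℕ), 0 ≤ x d w)
    (hsummable : ∀ d : ℤ, Summable (fun w : ℕ => x d (w + 1))) :
    ∀ d : ℤ, (N : ℤ) - 1 ≤ d →
      (∃ w : ℕ, 1 ≤ w ∧ d ≤ ((N : ℤ) - 1) * w ∧ 0 < x d w) ∧
      0 < ∑' w : ℕ, x d (w + 1) :=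
  u_d_positive_general N hN α₁ α₂ α β hα₁ hα₂ hβ hα x hx11 hrec hnonneg hsummable
end

section
/- Let N ≥ 3, α₁, α₂ > 0, β ≥ 0, α = α₁+α₂, and let ξ_w (w ≥ 2) take values 0, 1, N-1 with probabilities α₁(w-1)/(α(w-1)+β), α₂(w-1)/(α(w-1)+β), β/(α(w-1)+β), with ξ_1 ≡ N-1, all independent. Then Var(ξ_w) = α₁α₂/α² + O(1/w) as w → ∞, and Var(S_w) = (α₁α₂/α²)·w + O(log w) as w → ∞, where S_w = ξ_1+···+ξ_w. -/
open MeasureTheory ProbabilityTheory Finset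

/-!
Write `p = P(ξ_w = 1)` and `q = P(ξ_w = N - 1)`. Since `ξ_w` is a combination of two disjoint
indicators, `Var ξ_w = p + (N-1)² q - (p + (N-1) q)²`. As `w → ∞` we have
`p = α₂/α + O(1/w)` and `q = O(1/w)`, and this expression is Lipschitz in `(p, q)` on the
probability simplex, so `Var ξ_w = (α₂/α)(1 - α₂/α) + O(1/w)`. By independence
`Var S_w = ∑ Var ξ_i`, and the errors `O(1/i)` add up to a harmonic sum, which is `O(log w)`.
-/

def threePointVariance (m p q : ℝ) : ℝ := p + m ^ 2 * q - (p + m * q) ^ 2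

section ThreePoint

variable {Ω : Type*} {X : Ω → ℝ} {m : ℝ}

lemma pow_eq_indicator_add_indicator_of_forall_eq_or (hm : m ≠ 1)
    (hX : ∀ ω, X ω = 0 ∨ X ω = 1 ∨ X ω = m) {n : ℕ} (hn : n ≠ 0) :
    X ^ n = {ω | X ω = 1}.indicator (fun _ ↦ 1) + {ω | X ω = m}.indicator fun _ ↦ m ^ n := by
  funext ω
  rcases hX ω with h | h | h <;> simp [Set.indicator_apply, h, hm, hn, eq_comm]

variable [MeasurableSpace Ω]

lemma memLp_of_forall_eq_or (μ : Measure Ω) [IsFiniteMeasure μ] (hXm : Measurable X)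
    (hm : m ≠ 1) (hX : ∀ ω, X ω = 0 ∨ X ω = 1 ∨ X ω = m) (p : ENNReal) : MemLp X p μ := by
  rw [← pow_one X, pow_eq_indicator_add_indicator_of_forall_eq_or hm hX one_ne_zero]
  exact ((memLp_const (1 : ℝ)).indicator (hXm (measurableSet_singleton 1))).add
    ((memLp_const (m ^ 1)).indicator (hXm (measurableSet_singleton m)))

lemma integral_pow_of_forall_eq_or (μ : Measure Ω) [IsFiniteMeasure μ] (hXm : Measurable X)
    (hm : m ≠ 1) (hX : ∀ ω, X ω = 0 ∨ X ω = 1 ∨ X ω = m) {n : ℕ} (hn : n ≠ 0) :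
    ∫ ω, (X ^ n) ω ∂μ = μ.real {ω | X ω = 1} + m ^ n * μ.real {ω | X ω = m} := by
  have hA : MeasurableSet {ω | X ω = 1} := hXm (measurableSet_singleton 1)
  have hB : MeasurableSet {ω | X ω = m} := hXm (measurableSet_singleton m)
  rw [pow_eq_indicator_add_indicator_of_forall_eq_or hm hX hn,
    integral_add' ((integrable_const 1).indicator hA) ((integrable_const _).indicator hB),
    integral_indicator_const _ hA, integral_indicator_const _ hB, smul_eq_mul, smul_eq_mul,
    mul_one, mul_comm]

lemma variance_eq_threePointVariance (μ : Measure Ω) [IsProbabilityMeasure μ]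
    (hXm : Measurable X) (hm : m ≠ 1) (hX : ∀ ω, X ω = 0 ∨ X ω = 1 ∨ X ω = m) :
    variance X μ = threePointVariance m (μ.real {ω | X ω = 1}) (μ.real {ω | X ω = m}) := by
  have hmean := integral_pow_of_forall_eq_or μ hXm hm hX one_ne_zero
  rw [pow_one, pow_one] at hmean
  rw [variance_eq_sub (memLp_of_forall_eq_or μ hXm hm hX 2),
    integral_pow_of_forall_eq_or μ hXm hm hX two_ne_zero, hmean, threePointVariance]

end ThreePoint

lemma abs_threePointVariance_sub_le {m p q p' : ℝ} (hm : 0 ≤ m) (hp : 0 ≤ p) (hq : 0 ≤ q)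
    (hpq : p + q ≤ 1) (hp' : 0 ≤ p') (hp'1 : p' ≤ 1) :
    |threePointVariance m p q - p' * (1 - p')| ≤ |p - p'| + (m ^ 2 + 2 * m) * q := by
  have hsplit : threePointVariance m p q - p' * (1 - p')
      = (p - p') * (1 - p - p') + q * (m ^ 2 - 2 * m * p - m ^ 2 * q) := by
    unfold threePointVariance; ring
  have h₁ : |1 - p - p'| ≤ 1 := abs_le.2 ⟨by linarith, by linarith⟩
  have h₂ : |m ^ 2 - 2 * m * p - m ^ 2 * q| ≤ m ^ 2 + 2 * m :=
    abs_le.2 ⟨by nlinarith [mul_nonneg hm hp, mul_nonneg (sq_nonneg m) hq],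
      by nlinarith [mul_nonneg hm hp, mul_nonneg (sq_nonneg m) hq]⟩
  calc |threePointVariance m p q - p' * (1 - p')|
      ≤ |(p - p') * (1 - p - p')| + |q * (m ^ 2 - 2 * m * p - m ^ 2 * q)| :=
        hsplit ▸ abs_add_le _ _
    _ = |p - p'| * |1 - p - p'| + q * |m ^ 2 - 2 * m * p - m ^ 2 * q| := by
        rw [abs_mul, abs_mul, abs_of_nonneg hq]
    _ ≤ |p - p'| * 1 + q * (m ^ 2 + 2 * m) := by gcongr
    _ = |p - p'| + (m ^ 2 + 2 * m) * q := by ring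

lemma abs_threePointVariance_urn_sub_le {m α α₂ β w : ℝ} (hm : 0 ≤ m) (hα : 0 < α)
    (hα₂ : 0 ≤ α₂) (hα₂α : α₂ ≤ α) (hβ : 0 ≤ β) (hw : 2 ≤ w) :
    |threePointVariance m (α₂ * (w - 1) / (α * (w - 1) + β)) (β / (α * (w - 1) + β))
        - α₂ / α * (1 - α₂ / α)|
      ≤ (2 * α₂ * β / α ^ 2 + 2 * (m ^ 2 + 2 * m) * β / α) / w := by
  set D := α * (w - 1) + β
  have hD : α * w / 2 ≤ D := by nlinarith
  have hDpos : 0 < D := by nlinarith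
  have hp : |α₂ * (w - 1) / D - α₂ / α| ≤ 2 * α₂ * β / α ^ 2 / w := by
    have : α₂ * (w - 1) / D - α₂ / α = -(α₂ * β / (α * D)) := by
      field_simp; ring
    rw [this, abs_neg, abs_of_nonneg (by positivity), div_div,
      div_le_div_iff₀ (by positivity) (by positivity)]
    nlinarith [mul_le_mul_of_nonneg_left hD (by positivity : 0 ≤ α₂ * β * α ^ 2)]
  have hq : β / D ≤ 2 * β / α / w := by
    rw [div_div, div_le_div_iff₀ hDpos (by positivity)]
    nlinarith [mul_le_mul_of_nonneg_left hD hβ]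
  calc _ ≤ |α₂ * (w - 1) / D - α₂ / α| + (m ^ 2 + 2 * m) * (β / D) := by
        have hw1 : 0 ≤ w - 1 := by linarith
        refine abs_threePointVariance_sub_le hm (by positivity) (by positivity) ?_
          (by positivity) (div_le_one_of_le₀ hα₂α hα.le)
        rw [← add_div, div_le_one hDpos]
        nlinarith
    _ ≤ 2 * α₂ * β / α ^ 2 / w + (m ^ 2 + 2 * m) * (2 * β / α / w) := by gcongr
    _ = _ := by ring

lemma exists_abs_variance_urn_sub_le_div {Ω : Type*} [MeasurableSpace Ω] (μ : Measure Ω)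
    [IsProbabilityMeasure μ] {X : ℕ → Ω → ℝ} {m α α₂ β : ℝ} (hm : 1 < m) (hα : 0 < α)
    (hα₂ : 0 ≤ α₂) (hα₂α : α₂ ≤ α) (hβ : 0 ≤ β) (hXm : ∀ i, Measurable (X i))
    (hX1 : ∀ ω, X 1 ω = m) (hX : ∀ i, 1 ≤ i → ∀ ω, X i ω = 0 ∨ X i ω = 1 ∨ X i ω = m)
    (hp : ∀ w : ℕ, 2 ≤ w →
      μ {ω | X w ω = 1} = ENNReal.ofReal (α₂ * ((w : ℝ) - 1) / (α * ((w : ℝ) - 1) + β)))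
    (hq : ∀ w : ℕ, 2 ≤ w →
      μ {ω | X w ω = m} = ENNReal.ofReal (β / (α * ((w : ℝ) - 1) + β))) :
    ∃ C, 0 ≤ C ∧ ∀ w : ℕ, 1 ≤ w → |variance (X w) μ - α₂ / α * (1 - α₂ / α)| ≤ C / w := by
  have hL : 0 ≤ α₂ / α * (1 - α₂ / α) :=
    mul_nonneg (by positivity) (sub_nonneg.2 (div_le_one_of_le₀ hα₂α hα.le))
  refine ⟨2 * α₂ * β / α ^ 2 + 2 * (m ^ 2 + 2 * m) * β / α + α₂ / α * (1 - α₂ / α),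
    by positivity, fun w hw ↦ ?_⟩
  rcases (by omega : w = 1 ∨ 2 ≤ w) with rfl | hw
  · have hvar : variance (X 1) μ = 0 := by
      simp [show X 1 = fun _ ↦ m from funext hX1, variance, evariance]
    rw [hvar, zero_sub, abs_neg, abs_of_nonneg hL, Nat.cast_one, div_one]
    exact le_add_of_nonneg_left (by positivity)
  have hw' : (2 : ℝ) ≤ w := by exact_mod_cast hw
  have hw1 : (0 : ℝ) ≤ w - 1 := by linarith
  rw [variance_eq_threePointVariance μ (hXm w) hm.ne' (hX w (by omega)), measureReal_def,
    measureReal_def, hp w hw, hq w hw, ENNReal.toReal_ofReal (by positivity),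
    ENNReal.toReal_ofReal (by positivity)]
  exact (abs_threePointVariance_urn_sub_le (by linarith) hα hα₂ hα₂α hβ hw').trans
    (div_le_div_of_nonneg_right (le_add_of_nonneg_right hL) (by positivity))

lemma abs_sum_Icc_sub_mul_le {a : ℕ → ℝ} {L C : ℝ} (hC : 0 ≤ C) (w : ℕ)
    (ha : ∀ i ∈ Icc 1 w, |a i - L| ≤ C / i) :
    |∑ i ∈ Icc 1 w, a i - L * w| ≤ C * (1 + Real.log w) := by
  have hsum : ∑ i ∈ Icc 1 w, a i - L * w = ∑ i ∈ Icc 1 w, (a i - L) := by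
    rw [sum_sub_distrib, sum_const, Nat.card_Icc, nsmul_eq_mul, Nat.add_sub_cancel, mul_comm]
  calc |∑ i ∈ Icc 1 w, a i - L * w| ≤ ∑ i ∈ Icc 1 w, |a i - L| := hsum ▸ abs_sum_le_sum_abs _ _
    _ ≤ ∑ i ∈ Icc 1 w, C / i := sum_le_sum ha
    _ = C * harmonic w := by
        rw [harmonic_eq_sum_Icc, Rat.cast_sum, mul_sum]
        simp [div_eq_mul_inv]
    _ ≤ C * (1 + Real.log w) := mul_le_mul_of_nonneg_left (harmonic_le_one_add_log w) hC

lemma one_le_log_of_three_le {x : ℝ} (hx : 3 ≤ x) : 1 ≤ Real.log x := by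
  rw [Real.le_log_iff_exp_le (by linarith)]
  exact Real.exp_one_lt_three.le.trans hx

theorem variance_xi_and_Sw_general
    (N : ℕ) (hN : 3 ≤ N)
    (α₁ α₂ α β : ℝ) (hα₁ : 0 < α₁) (hα₂ : 0 < α₂) (hβ : 0 ≤ β) (hα : α = α₁ + α₂)
    (Ω : Type*) [MeasurableSpace Ω] (μ : Measure Ω) [IsProbabilityMeasure μ]
    (ξ : ℕ → Ω → ℤ) (hξmeas : ∀ i, Measurable (ξ i))
    (hξ1 : ∀ ω, ξ 1 ω = (N : ℤ) - 1)
    (hξval : ∀ w : ℕ, 2 ≤ w → ∀ ω, ξ w ω = 0 ∨ ξ w ω = 1 ∨ ξ w ω = (N : ℤ) - 1)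
    (hξone : ∀ w : ℕ, 2 ≤ w →
      μ {ω | ξ w ω = 1} = ENNReal.ofReal (α₂ * ((w : ℝ) - 1) / (α * ((w : ℝ) - 1) + β)))
    (hξN : ∀ w : ℕ, 2 ≤ w →
      μ {ω | ξ w ω = (N : ℤ) - 1} = ENNReal.ofReal (β / (α * ((w : ℝ) - 1) + β)))
    (hindep : iIndepFun ξ μ)
    (S : ℕ → Ω → ℤ)
    (hS : ∀ (w : ℕ) (ω : Ω), S w ω = ∑ i ∈ Finset.Icc 1 w, ξ i ω) :
    (∃ C : ℝ, ∃ w₀ : ℕ, ∀ w : ℕ, w₀ ≤ w →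
      |variance (fun ω => ((ξ w ω : ℝ))) μ - α₁ * α₂ / α ^ 2| ≤ C / w) ∧
    (∃ C : ℝ, ∃ w₀ : ℕ, ∀ w : ℕ, w₀ ≤ w →
      |variance (fun ω => ((S w ω : ℝ))) μ - (α₁ * α₂ / α ^ 2) * w| ≤ C * Real.log w) := by
  set n : ℤ := (N : ℤ) - 1
  have hn : (1 : ℝ) < n := by exact_mod_cast (by omega : 1 < n)
  have hαpos : 0 < α := hα ▸ add_pos hα₁ hα₂
  have hL : α₁ * α₂ / α ^ 2 = α₂ / α * (1 - α₂ / α) := by subst hα; field_simp; ring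
  have hmeas : ∀ i, Measurable fun ω ↦ (ξ i ω : ℝ) := fun i ↦ measurable_from_top.comp (hξmeas i)
  have hval : ∀ i, 1 ≤ i → ∀ ω, (ξ i ω : ℝ) = 0 ∨ (ξ i ω : ℝ) = 1 ∨ (ξ i ω : ℝ) = n := by
    intro i hi ω
    rcases (by omega : i = 1 ∨ 2 ≤ i) with rfl | hi
    · simp [hξ1]
    · rcases hξval i hi ω with h | h | h <;> simp [h]
  obtain ⟨C, hC0, hC⟩ := exists_abs_variance_urn_sub_le_div μ hn hαpos hα₂.le
    (by linarith) hβ hmeas (by simp [hξ1]) hval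
    (fun w hw ↦ by simpa only [Int.cast_eq_one] using hξone w hw)
    (fun w hw ↦ by simpa only [Int.cast_inj] using hξN w hw)
  rw [hL]
  refine ⟨⟨C, 1, hC⟩, 2 * C, 3, fun w hw ↦ ?_⟩
  have hsum : (fun ω ↦ (S w ω : ℝ)) = ∑ i ∈ Icc 1 w, fun ω ↦ (ξ i ω : ℝ) := by
    funext ω; simp [hS]
  rw [hsum, IndepFun.variance_sum
    (fun i hi ↦ memLp_of_forall_eq_or μ (hmeas i) hn.ne' (hval i (mem_Icc.1 hi).1) 2)
    (fun i _ j _ hij ↦ (hindep.indepFun hij).comp measurable_from_top measurable_from_top)]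
  calc _ ≤ C * (1 + Real.log w) :=
        abs_sum_Icc_sub_mul_le hC0 w fun i hi ↦ hC i (mem_Icc.1 hi).1
    _ ≤ 2 * C * Real.log w := by
        nlinarith [one_le_log_of_three_le (Nat.ofNat_le_cast.2 hw : (3 : ℝ) ≤ w)]

/-- asymptotic variance of ξ_w and of S_w. -/
theorem variance_xi_and_Sw
    (N : ℕ) (hN : 3 ≤ N)
    (α₁ α₂ α β : ℝ) (hα₁ : 0 < α₁) (hα₂ : 0 < α₂) (hβ : 0 ≤ β) (hα : α = α₁ + α₂)
    (Ω : Type*) [MeasurableSpace Ω] (μ : Measure Ω) [IsProbabilityMeasure μ]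
    (ξ : ℕ → Ω → ℤ) (hξmeas : ∀ i, Measurable (ξ i))
    (hξzero : ∀ ω, ξ 0 ω = 0)
    (hξ1 : ∀ ω, ξ 1 ω = (N : ℤ) - 1)
    (hξval : ∀ w : ℕ, 2 ≤ w → ∀ ω, ξ w ω = 0 ∨ ξ w ω = 1 ∨ ξ w ω = (N : ℤ) - 1)
    (hξ0 : ∀ w : ℕ, 2 ≤ w →
      μ {ω | ξ w ω = 0} = ENNReal.ofReal (α₁ * ((w : ℝ) - 1) / (α * ((w : ℝ) - 1) + β)))
    (hξone : ∀ w : ℕ, 2 ≤ w →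
      μ {ω | ξ w ω = 1} = ENNReal.ofReal (α₂ * ((w : ℝ) - 1) / (α * ((w : ℝ) - 1) + β)))
    (hξN : ∀ w : ℕ, 2 ≤ w →
      μ {ω | ξ w ω = (N : ℤ) - 1} = ENNReal.ofReal (β / (α * ((w : ℝ) - 1) + β)))
    (hindep : iIndepFun ξ μ)
    (S : ℕ → Ω → ℤ)
    (hS : ∀ (w : ℕ) (ω : Ω), S w ω = ∑ i ∈ Finset.Icc 1 w, ξ i ω) :
    (∃ C : ℝ, ∃ w₀ : ℕ, ∀ w : ℕ, w₀ ≤ w →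
      |variance (fun ω => ((ξ w ω : ℝ))) μ - α₁ * α₂ / α ^ 2| ≤ C / w) ∧
    (∃ C : ℝ, ∃ w₀ : ℕ, ∀ w : ℕ, w₀ ≤ w →
      |variance (fun ω => ((S w ω : ℝ))) μ - (α₁ * α₂ / α ^ 2) * w| ≤ C * Real.log w) :=
  variance_xi_and_Sw_general N hN α₁ α₂ α β hα₁ hα₂ hβ hα Ω μ ξ hξmeas hξ1 hξval hξone hξN hindep S
    hS
end

section
/- Let N ≥ 3, α₁, α₂ > 0, β ≥ 0, α = α₁+α₂, and let S_w = ξ_1+···+ξ_w with ξ_i independent, ξ_1 ≡ N-1, and ξ_w ∈ {0,1,N-1} for w ≥ 2 as in the N-interactions representation. Fix 0 < ε < 1/6 and set f = (α/α₂)d. Then there exist constants c > 0 and d₀ such that for all d ≥ d₀ and all integers w with w < f - f^{1/2+ε}, P(S_w = d) ≤ exp(-c·f^{2ε} + O(log f)); in particular Σ_{w < f - f^{1/2+ε}} P(S_w = d) = o(f^{-(1+1/α)}) as d → ∞. -/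
/-!
Apart from `ξ 1 ≡ N - 1`, the summands of `S w` take values in `[0, N - 1]` and have means
`α₂ / α + O(1 / i)`, so `E[S w] ≤ (α₂ / α) w + O(√w)`. For `w < f - f ^ (1/2 + ε)` the target
`d = (α₂ / α) f` therefore exceeds `E[S w]` by at least `(α₂ / 2α) f ^ (1/2 + ε)`, and Hoeffding's
inequality, with variance proxy `w (N - 1)² / 4 ≤ f (N - 1)² / 4`, bounds `P(S w = d)` by
`exp(-c f ^ (2ε))`. Summing over the at most `f + 2` relevant `w` costs only a polynomial factor.
-/

open MeasureTheory ProbabilityTheory Finset Filter Real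

lemma sum_Icc_inv_le_two_mul_sqrt (n : ℕ) : ∑ i ∈ Icc 1 n, (i : ℝ)⁻¹ ≤ 2 * √n := by
  induction n with
  | zero => simp
  | succ n ih =>
    rw [sum_Icc_succ_top (by omega)]
    push_cast
    set s := √((n : ℝ) + 1)
    set t := √(n : ℝ)
    have hs : s ^ 2 = n + 1 := sq_sqrt (by positivity)
    have ht : t ^ 2 = n := sq_sqrt (by positivity)
    have hts : t ≤ s := sqrt_le_sqrt (by linarith)
    have hs1 : 1 ≤ s := one_le_sqrt.2 (by linarith [(Nat.cast_nonneg n : (0:ℝ) ≤ n)])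
    have hst : s + t ≤ 2 * s ^ 2 := by nlinarith
    -- because `(s - t) (s + t) = 1`
    have hstep : ((n : ℝ) + 1)⁻¹ ≤ 2 * (s - t) := by
      rw [inv_le_iff_one_le_mul₀ (by positivity)]
      nlinarith [mul_nonneg (sub_nonneg.2 hts) (sub_nonneg.2 hst)]
    linarith

lemma three_point_mean_le {α₂ α β M u : ℝ} (hα : 0 < α) (hα₂ : 0 ≤ α₂) (hβ : 0 ≤ β)
    (hM : 0 ≤ M) (hu : 1 ≤ u) :
    α₂ * u / (α * u + β) + M * (β / (α * u + β)) ≤ α₂ / α + 2 * M * β / (α * (u + 1)) := by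
  have hinv : M * β / (α * u) ≤ 2 * M * β / (α * (u + 1)) := by
    rw [div_le_div_iff₀ (by positivity) (by positivity)]
    nlinarith [mul_nonneg (mul_nonneg (mul_nonneg hM hβ) hα.le) (sub_nonneg.2 hu)]
  calc α₂ * u / (α * u + β) + M * (β / (α * u + β)) = (α₂ * u + M * β) / (α * u + β) := by
        field_simp
    _ ≤ (α₂ * u + M * β) / (α * u) := by gcongr; linarith
    _ = α₂ / α + M * β / (α * u) := by field_simp
    _ ≤ α₂ / α + 2 * M * β / (α * (u + 1)) := by linarith

lemma tendsto_rpow_mul_exp_neg_mul_rpow_atTop_nhds_zero (a : ℝ) {b c : ℝ} (hb : 0 < b)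
    (hc : 0 < c) :
    Tendsto (fun x : ℝ ↦ x ^ a * exp (-c * x ^ b)) atTop (nhds 0) := by
  refine ((tendsto_rpow_mul_exp_neg_mul_atTop_nhds_zero (a / b) c hc).comp
    (tendsto_rpow_atTop hb)).congr' ?_
  filter_upwards [eventually_ge_atTop 0] with x hx
  rw [Function.comp_apply, ← rpow_mul hx, mul_div_cancel₀ a hb.ne']

lemma tendsto_sum_filter_mul_rpow_of_le_exp {F : ℕ → ℝ} (hF : Tendsto F atTop atTop)
    {p : ℕ → ℕ → ℝ} (hp : ∀ d w, 0 ≤ p d w) {P : ℕ → ℕ → Prop} [∀ d, DecidablePred (P d)]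
    (a : ℝ) {b c : ℝ} (hb : 0 < b) (hc : 0 < c)
    (hpP : ∀ᶠ d in atTop, ∀ w, P d w → p d w ≤ exp (-c * F d ^ b)) :
    Tendsto (fun d ↦ (∑ w ∈ (range (⌈F d⌉₊ + 1)).filter (P d), p d w) * F d ^ a)
      atTop (nhds 0) := by
  have hlim :=
    ((tendsto_rpow_mul_exp_neg_mul_rpow_atTop_nhds_zero (a + 1) hb hc).comp hF).const_mul 2
  rw [mul_zero] at hlim
  refine squeeze_zero' ?_ ?_ hlim
  · filter_upwards [hF.eventually_ge_atTop 0] with d hd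
    exact mul_nonneg (sum_nonneg fun w _ ↦ hp d w) (rpow_nonneg hd a)
  · filter_upwards [hpP, hF.eventually_ge_atTop 2] with d hd hF2
    set T := (range (⌈F d⌉₊ + 1)).filter (P d)
    have hcard : (#T : ℝ) ≤ 2 * F d := by
      have h1 : #T ≤ ⌈F d⌉₊ + 1 := (card_filter_le _ _).trans (card_range _).le
      have h2 : (⌈F d⌉₊ : ℝ) < F d + 1 := Nat.ceil_lt_add_one (by linarith)
      have h3 : (#T : ℝ) ≤ ⌈F d⌉₊ + 1 := by exact_mod_cast h1
      linarith
    have hsum : ∑ w ∈ T, p d w ≤ 2 * F d * exp (-c * F d ^ b) :=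
      calc ∑ w ∈ T, p d w ≤ #T * exp (-c * F d ^ b) := by
            simpa using sum_le_card_nsmul T _ _ fun w hw ↦ hd w (mem_filter.1 hw).2
        _ ≤ 2 * F d * exp (-c * F d ^ b) := by gcongr
    calc (∑ w ∈ T, p d w) * F d ^ a ≤ 2 * F d * exp (-c * F d ^ b) * F d ^ a := by gcongr
      _ = 2 * (F d ^ (a + 1) * exp (-c * F d ^ b)) := by
        rw [rpow_add_one (by linarith)]; ring

lemma eventually_mul_rpow_le_two_mul_sq_div {r C K ε : ℝ} (hr : 0 < r) (hC : 0 ≤ C)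
    (hK : 0 < K) (hε : 0 < ε) :
    ∀ᶠ F in atTop, ∀ w m : ℝ, 0 < w → w < F - F ^ (1 / 2 + ε) → m ≤ r * w + C * √w →
      0 ≤ r * F - m ∧ r ^ 2 / (2 * K) * F ^ (2 * ε) ≤ 2 * (r * F - m) ^ 2 / (w * K) := by
  filter_upwards [eventually_gt_atTop 0,
    (tendsto_rpow_atTop hε).eventually_ge_atTop (2 * C / r)] with F hF hFε w m hw hwF hm
  have hQ : F ^ (1 / 2 + ε) = √F * F ^ ε := by rw [rpow_add hF, sqrt_eq_rpow]
  set Q := F ^ (1 / 2 + ε)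
  have hQ0 : 0 < Q := by positivity
  have hQ2 : Q ^ 2 = F * F ^ (2 * ε) := by
    rw [hQ, mul_pow, sq_sqrt hF.le, ← rpow_mul_natCast hF.le]
    ring_nf
  have hC_le : C ≤ r / 2 * F ^ ε := by
    rw [div_le_iff₀ hr] at hFε
    linarith
  have hCw : C * √w ≤ r / 2 * Q := by
    calc C * √w ≤ C * √F := by gcongr; linarith
      _ ≤ r / 2 * F ^ ε * √F := by gcongr
      _ = r / 2 * Q := by rw [hQ]; ring
  have hgap : r / 2 * Q ≤ r * F - m := by nlinarith
  refine ⟨(mul_pos (half_pos hr) hQ0).le.trans hgap, ?_⟩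
  calc r ^ 2 / (2 * K) * F ^ (2 * ε) = 2 * (r / 2 * Q) ^ 2 / (F * K) := by
        rw [mul_pow, hQ2]; field_simp
    _ ≤ 2 * (r * F - m) ^ 2 / (F * K) := by gcongr
    _ ≤ 2 * (r * F - m) ^ 2 / (w * K) := by gcongr; linarith

section Probability

variable {Ω : Type*} [MeasurableSpace Ω] {μ : Measure Ω}

lemma measureReal_sum_integral_add_le_sum_le [IsProbabilityMeasure μ] {ι : Type*}
    {X : ι → Ω → ℝ} (h_indep : iIndepFun X μ) {s : Finset ι}
    (hX : ∀ i ∈ s, AEMeasurable (X i) μ) {a b : ℝ} (hXab : ∀ i ∈ s, ∀ᵐ ω ∂μ, X i ω ∈ Set.Icc a b)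
    {x : ℝ} (hx : 0 ≤ x) :
    μ.real {ω | ∑ i ∈ s, μ[X i] + x ≤ ∑ i ∈ s, X i ω} ≤
      exp (-2 * x ^ 2 / (#s * (b - a) ^ 2)) := by
  have h_centered : iIndepFun (fun i ω ↦ X i ω - μ[X i]) μ :=
    h_indep.comp (fun i y ↦ y - ∫ ω, X i ω ∂μ) fun i ↦ measurable_sub_const _
  have h := HasSubgaussianMGF.measure_sum_ge_le_of_iIndepFun h_centered
    (fun i hi ↦ hasSubgaussianMGF_of_mem_Icc (hX i hi) (hXab i hi)) hx
  have hparam : 2 * ((∑ i ∈ s, (‖b - a‖₊ / 2) ^ 2 : NNReal) : ℝ) = #s * (b - a) ^ 2 / 2 := by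
    simp [div_pow, sq_abs]
    ring
  refine (measureReal_mono (fun ω hω ↦ ?_)).trans (h.trans_eq ?_)
  · simp only [Set.mem_ofPred_eq, Finset.sum_sub_distrib] at hω ⊢
    linarith
  · rw [hparam, div_div_eq_mul_div]
    congr 1
    ring

lemma integral_le_of_forall_eq_zero_or_eq_or_eq [IsFiniteMeasure μ] {X : Ω → ℝ}
    (hX : Measurable X) {a b : ℝ} (ha : 0 ≤ a) (hb : 0 ≤ b)
    (hval : ∀ ω, X ω = 0 ∨ X ω = a ∨ X ω = b) :
    μ[X] ≤ a * μ.real {ω | X ω = a} + b * μ.real {ω | X ω = b} := by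
  set A := {ω | X ω = a}
  set B := {ω | X ω = b}
  have hA : MeasurableSet A := hX (measurableSet_singleton a)
  have hB : MeasurableSet B := hX (measurableSet_singleton b)
  have hA_int := (integrable_const a (μ := μ)).indicator hA
  have hB_int := (integrable_const b (μ := μ)).indicator hB
  have hA0 : ∀ ω, 0 ≤ A.indicator (fun _ ↦ a) ω := Set.indicator_nonneg fun _ _ ↦ ha
  have hB0 : ∀ ω, 0 ≤ B.indicator (fun _ ↦ b) ω := Set.indicator_nonneg fun _ _ ↦ hb
  have hX0 : ∀ ω, 0 ≤ X ω := fun ω ↦ by rcases hval ω with h | h | h <;> rw [h] <;> assumption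
  have hXle : ∀ ω, X ω ≤ A.indicator (fun _ ↦ a) ω + B.indicator (fun _ ↦ b) ω := by
    intro ω
    rcases hval ω with h | h | h
    · linarith [hA0 ω, hB0 ω]
    · rw [Set.indicator_of_mem (show ω ∈ A from h)]; linarith [hB0 ω]
    · rw [Set.indicator_of_mem (show ω ∈ B from h)]; linarith [hA0 ω]
  calc μ[X] ≤ ∫ ω, (A.indicator (fun _ ↦ a) ω + B.indicator (fun _ ↦ b) ω) ∂μ :=
        integral_mono_of_nonneg (ae_of_all _ hX0) (hA_int.add hB_int) (ae_of_all _ hXle)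
    _ = a * μ.real A + b * μ.real B := by
        rw [integral_add hA_int hB_int, integral_indicator_const _ hA,
          integral_indicator_const _ hB, smul_eq_mul, smul_eq_mul, mul_comm a, mul_comm b]

lemma integral_intCast_le [IsProbabilityMeasure μ] {ξ : Ω → ℤ} (hξ : Measurable ξ) {N : ℕ}
    (hN : 1 ≤ N) {α₂ α β u : ℝ} (hα : 0 < α) (hα₂ : 0 ≤ α₂) (hβ : 0 ≤ β) (hu : 1 ≤ u)
    (hval : ∀ ω, ξ ω = 0 ∨ ξ ω = 1 ∨ ξ ω = (N : ℤ) - 1)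
    (hone : μ {ω | ξ ω = 1} = ENNReal.ofReal (α₂ * u / (α * u + β)))
    (hNsub : μ {ω | ξ ω = (N : ℤ) - 1} = ENNReal.ofReal (β / (α * u + β))) :
    μ[fun ω ↦ (ξ ω : ℝ)] ≤ α₂ / α + 2 * ((N : ℝ) - 1) * β / (α * (u + 1)) := by
  have hM : (0 : ℝ) ≤ (N : ℝ) - 1 := by
    have : (1 : ℝ) ≤ N := by exact_mod_cast hN
    linarith
  have hcast : ∀ ω, ((ξ ω : ℤ) : ℝ) = 0 ∨ (ξ ω : ℝ) = 1 ∨ (ξ ω : ℝ) = (N : ℝ) - 1 := by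
    intro ω
    rcases hval ω with h | h | h <;> simp [h]
  have hone' : {ω | (ξ ω : ℝ) = 1} = {ω | ξ ω = 1} := by ext; simp
  have hNsub' : {ω | (ξ ω : ℝ) = (N : ℝ) - 1} = {ω | ξ ω = (N : ℤ) - 1} := by
    ext; simp only [Set.mem_ofPred_eq]; norm_cast
  calc μ[fun ω ↦ (ξ ω : ℝ)]
      ≤ 1 * μ.real {ω | (ξ ω : ℝ) = 1} + ((N : ℝ) - 1) * μ.real {ω | (ξ ω : ℝ) = (N : ℝ) - 1} :=
        integral_le_of_forall_eq_zero_or_eq_or_eq ((measurable_of_countable _).comp hξ)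
          zero_le_one hM hcast
    _ = α₂ * u / (α * u + β) + ((N : ℝ) - 1) * (β / (α * u + β)) := by
        rw [hone', hNsub', measureReal_def, measureReal_def, hone, hNsub,
          ENNReal.toReal_ofReal (by positivity), ENNReal.toReal_ofReal (by positivity), one_mul]
    _ ≤ _ := three_point_mean_le hα hα₂ hβ hM hu

lemma sum_integral_intCast_le [IsProbabilityMeasure μ] {ξ : ℕ → Ω → ℤ}
    (hξmeas : ∀ i, Measurable (ξ i)) {N : ℕ} (hN : 1 ≤ N) {α₂ α β : ℝ} (hα : 0 < α)
    (hα₂ : 0 ≤ α₂) (hβ : 0 ≤ β) (hξ1 : ∀ ω, ξ 1 ω = (N : ℤ) - 1)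
    (hξval : ∀ w : ℕ, 2 ≤ w → ∀ ω, ξ w ω = 0 ∨ ξ w ω = 1 ∨ ξ w ω = (N : ℤ) - 1)
    (hξone : ∀ w : ℕ, 2 ≤ w →
      μ {ω | ξ w ω = 1} = ENNReal.ofReal (α₂ * ((w : ℝ) - 1) / (α * ((w : ℝ) - 1) + β)))
    (hξN : ∀ w : ℕ, 2 ≤ w →
      μ {ω | ξ w ω = (N : ℤ) - 1} = ENNReal.ofReal (β / (α * ((w : ℝ) - 1) + β)))
    (w : ℕ) :
    ∑ i ∈ Icc 1 w, μ[fun ω ↦ (ξ i ω : ℝ)] ≤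
      α₂ / α * w + 2 * (((N : ℝ) - 1) * (1 + 2 * β / α)) * √w := by
  set C := ((N : ℝ) - 1) * (1 + 2 * β / α)
  have hM : (0 : ℝ) ≤ (N : ℝ) - 1 := by
    have : (1 : ℝ) ≤ N := by exact_mod_cast hN
    linarith
  have hterm : ∀ i ∈ Icc 1 w, μ[fun ω ↦ (ξ i ω : ℝ)] ≤ α₂ / α + C * (i : ℝ)⁻¹ := by
    intro i hi
    rcases (mem_Icc.1 hi).1.eq_or_lt with rfl | hi2
    · have : μ[fun ω ↦ (ξ 1 ω : ℝ)] = (N : ℝ) - 1 := by simp [hξ1]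
      rw [this, Nat.cast_one, inv_one, mul_one]
      have : (N : ℝ) - 1 ≤ C :=
        le_mul_of_one_le_right hM (by linarith [(by positivity : 0 ≤ 2 * β / α)])
      linarith [div_nonneg hα₂ hα.le]
    · have hu : (1 : ℝ) ≤ (i : ℝ) - 1 := by
        have : (2 : ℝ) ≤ i := by exact_mod_cast hi2
        linarith
      refine (integral_intCast_le (hξmeas i) hN hα hα₂ hβ hu (hξval i hi2) (hξone i hi2)
        (hξN i hi2)).trans ?_
      rw [sub_add_cancel]
      have hi0 : (0 : ℝ) < i := by linarith
      calc α₂ / α + 2 * ((N : ℝ) - 1) * β / (α * i)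
          = α₂ / α + ((N : ℝ) - 1) * (2 * β / α) * (i : ℝ)⁻¹ := by field_simp
        _ ≤ α₂ / α + C * (i : ℝ)⁻¹ := by
          gcongr
          exact mul_le_mul_of_nonneg_left (by linarith) hM
  calc ∑ i ∈ Icc 1 w, μ[fun ω ↦ (ξ i ω : ℝ)] ≤ ∑ i ∈ Icc 1 w, (α₂ / α + C * (i : ℝ)⁻¹) :=
        sum_le_sum hterm
    _ = α₂ / α * w + C * ∑ i ∈ Icc 1 w, (i : ℝ)⁻¹ := by
        rw [sum_add_distrib, sum_const, Nat.card_Icc, ← mul_sum, nsmul_eq_mul]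
        push_cast; ring
    _ ≤ α₂ / α * w + 2 * C * √w := by
        have := sum_Icc_inv_le_two_mul_sqrt w
        have hC : 0 ≤ C := by positivity
        nlinarith

lemma measureReal_sum_intCast_eq_le [IsProbabilityMeasure μ] {ξ : ℕ → Ω → ℤ}
    (hξmeas : ∀ i, Measurable (ξ i)) (hindep : iIndepFun ξ μ) {N : ℕ} (hN : 2 ≤ N)
    (hξ1 : ∀ ω, ξ 1 ω = (N : ℤ) - 1)
    (hξval : ∀ w : ℕ, 2 ≤ w → ∀ ω, ξ w ω = 0 ∨ ξ w ω = 1 ∨ ξ w ω = (N : ℤ) - 1)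
    (w : ℕ) (k : ℤ) {x : ℝ} (hx : 0 ≤ x)
    (hxk : ∑ i ∈ Icc 1 w, μ[fun ω ↦ (ξ i ω : ℝ)] + x ≤ k) :
    μ.real {ω | ∑ i ∈ Icc 1 w, ξ i ω = k} ≤ exp (-2 * x ^ 2 / (w * ((N : ℝ) - 1) ^ 2)) := by
  have hM : (1 : ℝ) ≤ (N : ℝ) - 1 := by
    have : (2 : ℝ) ≤ N := by exact_mod_cast hN
    linarith
  have hbound : ∀ i ∈ Icc 1 w, ∀ ω, (ξ i ω : ℝ) ∈ Set.Icc 0 ((N : ℝ) - 1) := by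
    intro i hi ω
    rcases (mem_Icc.1 hi).1.eq_or_lt with rfl | hi2
    · simp [hξ1]; linarith
    · rcases hξval i hi2 ω with h | h | h <;> simp [h] <;> linarith
  have h := measureReal_sum_integral_add_le_sum_le
    (hindep.comp (fun _ ↦ ((↑) : ℤ → ℝ)) fun _ ↦ measurable_of_countable _)
    (fun i _ ↦ ((measurable_of_countable _).comp (hξmeas i)).aemeasurable)
    (fun i hi ↦ ae_of_all _ (hbound i hi)) hx
  rw [Nat.card_Icc, add_tsub_cancel_right, sub_zero] at h
  refine (measureReal_mono fun ω hω ↦ ?_).trans h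
  simp only [Set.mem_ofPred_eq, Function.comp_apply] at hω ⊢
  exact_mod_cast hω ▸ hxk

end Probability

theorem hoeffding_lower_tail_general
    (N : ℕ) (hN : 3 ≤ N)
    (α₁ α₂ α β : ℝ) (hα₁ : 0 < α₁) (hα₂ : 0 < α₂) (hβ : 0 ≤ β) (hα : α = α₁ + α₂)
    (Ω : Type*) [MeasurableSpace Ω] (μ : Measure Ω) [IsProbabilityMeasure μ]
    (ξ : ℕ → Ω → ℤ) (hξmeas : ∀ i, Measurable (ξ i))
    (hξ1 : ∀ ω, ξ 1 ω = (N : ℤ) - 1)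
    (hξval : ∀ w : ℕ, 2 ≤ w → ∀ ω, ξ w ω = 0 ∨ ξ w ω = 1 ∨ ξ w ω = (N : ℤ) - 1)
    (hξone : ∀ w : ℕ, 2 ≤ w →
      μ {ω | ξ w ω = 1} = ENNReal.ofReal (α₂ * ((w : ℝ) - 1) / (α * ((w : ℝ) - 1) + β)))
    (hξN : ∀ w : ℕ, 2 ≤ w →
      μ {ω | ξ w ω = (N : ℤ) - 1} = ENNReal.ofReal (β / (α * ((w : ℝ) - 1) + β)))
    (hindep : iIndepFun ξ μ)
    (S : ℕ → Ω → ℤ)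
    (hS : ∀ (w : ℕ) (ω : Ω), S w ω = ∑ i ∈ Finset.Icc 1 w, ξ i ω)
    (ε : ℝ) (hε0 : 0 < ε)
    (f : ℕ → ℝ) (hf : ∀ d : ℕ, f d = (α / α₂) * d) :
    (∃ c : ℝ, 0 < c ∧ ∃ C : ℝ, ∃ d₀ : ℕ, ∀ d : ℕ, d₀ ≤ d → ∀ w : ℕ,
      (w : ℝ) < f d - (f d) ^ ((1 : ℝ) / 2 + ε) →
      (μ {ω | S w ω = (d : ℤ)}).toReal ≤
        Real.exp (-c * (f d) ^ (2 * ε) + C * Real.log (f d))) ∧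
    Filter.Tendsto
      (fun d : ℕ =>
        (∑ w ∈ (Finset.range (Nat.ceil (f d) + 1)).filter
            (fun w : ℕ => (w : ℝ) < f d - (f d) ^ ((1 : ℝ) / 2 + ε)),
          (μ {ω | S w ω = (d : ℤ)}).toReal) * (f d) ^ (1 + 1 / α))
      Filter.atTop (nhds 0) := by
  have hα0 : 0 < α := hα ▸ add_pos hα₁ hα₂
  have hM : (2 : ℝ) ≤ (N : ℝ) - 1 := by
    have : (3 : ℝ) ≤ N := by exact_mod_cast hN
    linarith
  set c := (α₂ / α) ^ 2 / (2 * ((N : ℝ) - 1) ^ 2)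
  have hrf : ∀ d : ℕ, α₂ / α * f d = d := fun d ↦ by rw [hf]; field_simp
  have hf_tendsto : Tendsto f atTop atTop := by
    simp only [funext hf]
    exact tendsto_natCast_atTop_atTop.const_mul_atTop (by positivity)
  have hpoint : ∀ᶠ d in atTop, ∀ w : ℕ, (w : ℝ) < f d - f d ^ ((1 : ℝ) / 2 + ε) →
      μ.real {ω | S w ω = d} ≤ exp (-c * f d ^ (2 * ε)) := by
    filter_upwards [hf_tendsto.eventually (eventually_mul_rpow_le_two_mul_sq_div
      (C := 2 * (((N : ℝ) - 1) * (1 + 2 * β / α))) (K := ((N : ℝ) - 1) ^ 2)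
      (div_pos hα₂ hα0) (by positivity) (by positivity) hε0),
      eventually_ge_atTop 1] with d hd hd1 w hw
    simp only [hS]
    rcases Nat.eq_zero_or_pos w with rfl | hw0
    · have : {ω | ∑ i ∈ Icc 1 0, ξ i ω = (d : ℤ)} = ∅ := by ext; simp; omega
      simp only [this, measureReal_empty]
      positivity
    obtain ⟨hx, hsq⟩ := hd w _ (by exact_mod_cast hw0) hw (sum_integral_intCast_le hξmeas
      (by omega) hα0 hα₂.le hβ hξ1 hξval hξone hξN w)
    rw [hrf] at hx hsq
    refine (measureReal_sum_intCast_eq_le hξmeas hindep (by omega) hξ1 hξval w d hx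
      (by push_cast; linarith)).trans (exp_le_exp.2 ?_)
    rw [neg_mul, neg_mul, neg_div]
    exact neg_le_neg hsq
  obtain ⟨d₀, hd₀⟩ := eventually_atTop.1 hpoint
  refine ⟨⟨c, by positivity, 0, d₀, fun d hd w hw ↦ ?_⟩, ?_⟩
  · simpa [measureReal_def] using hd₀ d hd w hw
  · exact tendsto_sum_filter_mul_rpow_of_le_exp hf_tendsto (fun _ _ ↦ ENNReal.toReal_nonneg) _
      (by positivity) (by positivity) hpoint

/-- Hoeffding lower-tail bound for the representation S_w. -/
theorem hoeffding_lower_tail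
    (N : ℕ) (hN : 3 ≤ N)
    (α₁ α₂ α β : ℝ) (hα₁ : 0 < α₁) (hα₂ : 0 < α₂) (hβ : 0 ≤ β) (hα : α = α₁ + α₂)
    (Ω : Type*) [MeasurableSpace Ω] (μ : Measure Ω) [IsProbabilityMeasure μ]
    (ξ : ℕ → Ω → ℤ) (hξmeas : ∀ i, Measurable (ξ i))
    (hξzero : ∀ ω, ξ 0 ω = 0)
    (hξ1 : ∀ ω, ξ 1 ω = (N : ℤ) - 1)
    (hξval : ∀ w : ℕ, 2 ≤ w → ∀ ω, ξ w ω = 0 ∨ ξ w ω = 1 ∨ ξ w ω = (N : ℤ) - 1)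
    (hξ0 : ∀ w : ℕ, 2 ≤ w →
      μ {ω | ξ w ω = 0} = ENNReal.ofReal (α₁ * ((w : ℝ) - 1) / (α * ((w : ℝ) - 1) + β)))
    (hξone : ∀ w : ℕ, 2 ≤ w →
      μ {ω | ξ w ω = 1} = ENNReal.ofReal (α₂ * ((w : ℝ) - 1) / (α * ((w : ℝ) - 1) + β)))
    (hξN : ∀ w : ℕ, 2 ≤ w →
      μ {ω | ξ w ω = (N : ℤ) - 1} = ENNReal.ofReal (β / (α * ((w : ℝ) - 1) + β)))
    (hindep : iIndepFun ξ μ)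
    (S : ℕ → Ω → ℤ)
    (hS : ∀ (w : ℕ) (ω : Ω), S w ω = ∑ i ∈ Finset.Icc 1 w, ξ i ω)
    (ε : ℝ) (hε0 : 0 < ε) (hε : ε < 1 / 6)
    (f : ℕ → ℝ) (hf : ∀ d : ℕ, f d = (α / α₂) * d) :
    (∃ c : ℝ, 0 < c ∧ ∃ C : ℝ, ∃ d₀ : ℕ, ∀ d : ℕ, d₀ ≤ d → ∀ w : ℕ,
      (w : ℝ) < f d - (f d) ^ ((1 : ℝ) / 2 + ε) →
      (μ {ω | S w ω = (d : ℤ)}).toReal ≤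
        Real.exp (-c * (f d) ^ (2 * ε) + C * Real.log (f d))) ∧
    Filter.Tendsto
      (fun d : ℕ =>
        (∑ w ∈ (Finset.range (Nat.ceil (f d) + 1)).filter
            (fun w : ℕ => (w : ℝ) < f d - (f d) ^ ((1 : ℝ) / 2 + ε)),
          (μ {ω | S w ω = (d : ℤ)}).toReal) * (f d) ^ (1 + 1 / α))
      Filter.atTop (nhds 0) :=
  hoeffding_lower_tail_general N hN α₁ α₂ α β hα₁ hα₂ hβ hα Ω μ ξ hξmeas hξ1 hξval hξone hξN hindep
    S hS ε hε0 f hf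
end
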